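/- Let G be a finite group, F a family of subgroups of G, H ≤ G a subgroup, and R a commutative ring. For any RΓ_H-module N and any K ∈ F, there is an isomorphism of R-modules (ind^G_H N)(G/K) ≅ ⊕ N(g⁻¹Kg), where the sum runs over the cosets gH ∈ G/H such that g⁻¹Kg ≤ H. -/

import Mathlib

/-!
By uniqueness of adjoints `ind^G_H` is the left Kan extension along `Or(H) ⥤ Or(G)`, so
`(ind^G_H N)(G/K)` is the colimit of `N` over the comma category of pairs
`(H/L, G/K ⟶ G/L)`. Such a `G`-map is a `K`-fixed coset `gL`, so `g⁻¹Kg ≤ L ≤ H`, and the coset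
`gH` is preserved by the morphisms of the comma category. For each such coset `cH` the object
`(H/(c⁻¹Kc), K ↦ c(c⁻¹Kc))` receives exactly one morphism from every object lying over `cH`: the
`H`-map is forced because `H/L ⟶ G/L` is injective, and it exists because translating by `c⁻¹`
moves the point over the trivial coset of `G/H`. Hence the family of these objects is final, and the
colimit is the direct sum of their values.
-/

open CategoryTheory CategoryTheory.Limits

namespace OrbitPaper

variable {G : Type} [Group G]

/-- The conjugate subgroup `gKg⁻¹`. -/
def conjSub (g : G) (K : Subgroup G) : Subgroup G :=
  K.map (MulAut.conj g).toMonoidHom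

/-- A *family* of subgroups: a collection closed under conjugation and taking subgroups. -/
def IsFamily (F : Set (Subgroup G)) : Prop :=
  (∀ K ∈ F, ∀ g : G, conjSub g K ∈ F) ∧ (∀ K ∈ F, ∀ L : Subgroup G, L ≤ K → L ∈ F)

/-- `Fix A B` is the set of cosets of `B` in `G` that are fixed by the left translation
action of `A`; it is in canonical bijection with the set of `G`-maps `G/A ⟶ G/B`. -/
def Fix (A B : Subgroup G) : Type :=
  {x : G ⧸ B // ∀ a ∈ A, a • x = x}

namespace Fix

variable {A B C D : Subgroup G}

/-- The action of a `G`-map `G/B ⟶ G/C` on cosets of `B`. -/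
def ap (x : Fix B C) (y : G ⧸ B) : G ⧸ C :=
  Quotient.liftOn' y (fun a => a • x.1) (by
    intro a b hab
    rw [QuotientGroup.leftRel_apply] at hab
    show a • x.1 = b • x.1
    conv_rhs => rw [show b = a * (a⁻¹ * b) by group]
    rw [mul_smul, x.2 _ hab])

@[simp] lemma ap_mk (x : Fix B C) (a : G) : x.ap ((a : G) : G ⧸ B) = a • x.1 := rfl

lemma ap_smul (x : Fix B C) (g : G) (y : G ⧸ B) : x.ap (g • y) = g • x.ap y := by
  induction y using Quotient.inductionOn' with
  | h a =>
    show x.ap (g • ((a : G) : G ⧸ B)) = g • x.ap ((a : G) : G ⧸ B)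
    rw [MulAction.Quotient.smul_mk, ap_mk, ap_mk, smul_eq_mul, mul_smul]

/-- Composition of `G`-maps between coset spaces. -/
def comp (f : Fix A B) (x : Fix B C) : Fix A C :=
  ⟨x.ap f.1, fun a ha => by rw [← ap_smul, f.2 a ha]⟩

/-- The identity `G`-map `G/A ⟶ G/A`. -/
def one (A : Subgroup G) : Fix A A :=
  ⟨((1 : G) : G ⧸ A), fun a ha => by
    show a • ((1 : G) : G ⧸ A) = _
    rw [MulAction.Quotient.smul_mk]
    exact (QuotientGroup.eq).2 (by simpa using ha)⟩

lemma ap_one (y : G ⧸ B) : (one B).ap y = y := by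
  induction y using Quotient.inductionOn' with
  | h a =>
    show (one B).ap ((a : G) : G ⧸ B) = _
    rw [ap_mk]
    show a • ((1 : G) : G ⧸ B) = _
    rw [MulAction.Quotient.smul_mk, smul_eq_mul, mul_one]

lemma ap_ap (g : Fix B C) (h : Fix C D) (y : G ⧸ B) :
    (g.comp h).ap y = h.ap (g.ap y) := by
  induction y using Quotient.inductionOn' with
  | h a =>
    show (g.comp h).ap ((a : G) : G ⧸ B) = h.ap ((g.ap ((a : G) : G ⧸ B)))
    rw [ap_mk, ap_mk, ap_smul]
    rfl

@[simp] lemma one_comp (x : Fix A B) : (one A).comp x = x := by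
  apply Subtype.ext
  show x.ap ((1 : G) : G ⧸ A) = x.1
  rw [ap_mk, one_smul]

@[simp] lemma comp_one (f : Fix A B) : f.comp (one B) = f :=
  Subtype.ext (ap_one f.1)

lemma comp_assoc (f : Fix A B) (g : Fix B C) (h : Fix C D) :
    (f.comp g).comp h = f.comp (g.comp h) :=
  Subtype.ext (ap_ap g h f.1).symm

end Fix

/-- The orbit category `Or_F(G)`: objects are the subgroups in the family `F`
(representing the coset `G`-sets `G/H`), morphisms are the `G`-maps `G/H ⟶ G/K`. -/
structure Obj (G : Type) [Group G] (F : Set (Subgroup G)) : Type where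
  grp : Subgroup G
  mem : grp ∈ F

instance (F : Set (Subgroup G)) : Category (Obj G F) where
  Hom K L := Fix K.grp L.grp
  id K := Fix.one K.grp
  comp f g := f.comp g
  id_comp f := Fix.one_comp f
  comp_id f := Fix.comp_one f
  assoc f g h := Fix.comp_assoc f g h

/-- The category of (right) `RΓ_G`-modules: contravariant functors from the orbit
category `Or_F(G)` to `R`-modules. -/
abbrev OMod (G : Type) [Group G] (R : Type) [CommRing R] (F : Set (Subgroup G)) :=
  (Obj G F)ᵒᵖ ⥤ ModuleCat.{0} R

instance (R : Type) [CommRing R] (F : Set (Subgroup G)) :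
    HasFiniteBiproducts (OMod G R F) :=
  Abelian.hasFiniteBiproducts

variable (R : Type) [CommRing R]

/-- The `RΓ_G`-module `R[(G/L)^?]` sending `G/K` to the free `R`-module on the
`K`-fixed points of `G/L`.  For `L ∈ F` these are exactly the free modules `R[G/L^?]`. -/
noncomputable def stdMod (F : Set (Subgroup G)) (L : Subgroup G) : OMod G R F where
  obj K := ModuleCat.of R (Fix K.unop.grp L →₀ R)
  map {K K'} f := ModuleCat.ofHom (Finsupp.lmapDomain R R (fun x => Fix.comp f.unop x))
  map_id K := by
    have h : (fun x => Fix.comp (𝟙 K).unop x) = (id : Fix K.unop.grp L → Fix K.unop.grp L) :=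
      funext fun x => Fix.one_comp x
    show ModuleCat.ofHom (Finsupp.lmapDomain R R _) = _
    rw [h, Finsupp.lmapDomain_id]
    rfl
  map_comp {K K' K''} f g := by
    have h : (fun x : Fix K.unop.grp L => Fix.comp ((f ≫ g).unop) x) =
        (fun x : Fix K'.unop.grp L => Fix.comp g.unop x) ∘
          (fun x : Fix K.unop.grp L => Fix.comp f.unop x) :=
      funext fun x => (Fix.comp_assoc g.unop f.unop x)
    show ModuleCat.ofHom (Finsupp.lmapDomain R R _) = _
    rw [h, Finsupp.lmapDomain_comp]
    rfl

variable {R}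

/-- A finitely generated free `RΓ_G`-module: a finite direct sum of modules
`R[G/K^?]` with `K ∈ F`. -/
def IsFiniteFree {F : Set (Subgroup G)} (M : OMod G R F) : Prop :=
  ∃ (n : ℕ) (Ks : Fin n → Obj G F),
    Nonempty (M ≅ ⨁ (fun i => stdMod R F (Ks i).grp))

/-- A finitely generated projective `RΓ_G`-module: a direct summand (retract) of a
finitely generated free module. -/
def IsFGProjective {F : Set (Subgroup G)} (M : OMod G R F) : Prop :=
  ∃ N : OMod G R F, IsFiniteFree N ∧ ∃ (s : M ⟶ N) (r : N ⟶ M), s ≫ r = 𝟙 M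

/-- A finitely generated `RΓ_G`-module: admits an epimorphism from a finitely
generated free module. -/
def IsFG {F : Set (Subgroup G)} (M : OMod G R F) : Prop :=
  ∃ N : OMod G R F, IsFiniteFree N ∧ ∃ p : N ⟶ M, Epi p

/-- `P` is a projective resolution of `M` of length `≤ n`, by finitely generated
projective modules:  `0 → P_n → ⋯ → P_0 → M → 0` is exact. -/
def IsFiniteProjRes {F : Set (Subgroup G)} (M : OMod G R F)
    (P : ChainComplex (OMod G R F) ℕ)
    (π : P ⟶ (ChainComplex.single₀ (OMod G R F)).obj M) (n : ℕ) : Prop :=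
  (∀ i, IsFGProjective (P.X i)) ∧ (∀ i, i > n → IsZero (P.X i)) ∧ QuasiIso π

/-- `M` admits a finite projective resolution. -/
def HasFiniteProjRes {F : Set (Subgroup G)} (M : OMod G R F) : Prop :=
  ∃ P π n, IsFiniteProjRes M P π n


section Restriction

variable (H : Subgroup G)

/-- The family of subgroups of `H` induced by a family `F` of subgroups of `G`. -/
def fam (F : Set (Subgroup G)) : Set (Subgroup ↥H) :=
  {K : Subgroup ↥H | K.map H.subtype ∈ F}

/-- The canonical map `H/L → G/L`. -/
def push (L : Subgroup ↥H) : ↥H ⧸ L → G ⧸ (L.map H.subtype) :=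
  Quotient.map' Subtype.val (by
    intro a b hab
    rw [QuotientGroup.leftRel_apply] at hab ⊢
    exact ⟨a⁻¹ * b, hab, rfl⟩)

@[simp] lemma push_mk (L : Subgroup ↥H) (a : ↥H) :
    push H L ((a : ↥H) : ↥H ⧸ L) = ((a : G) : G ⧸ (L.map H.subtype)) := rfl

lemma push_smul (L : Subgroup ↥H) (h : ↥H) (y : ↥H ⧸ L) :
    push H L (h • y) = (h : G) • push H L y := by
  induction y using Quotient.inductionOn' with
  | h a =>
    show push H L (h • ((a : ↥H) : ↥H ⧸ L)) = (h : G) • push H L ((a : ↥H) : ↥H ⧸ L)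
    rw [MulAction.Quotient.smul_mk, push_mk, push_mk, MulAction.Quotient.smul_mk]
    rfl

lemma ap_push {L M : Subgroup ↥H} (g : Fix L M)
    (w : Fix (L.map H.subtype) (M.map H.subtype))
    (hw : w.1 = push H M g.1) (y : ↥H ⧸ L) :
    w.ap (push H L y) = push H M (g.ap y) := by
  induction y using Quotient.inductionOn' with
  | h a =>
    show w.ap (((a : G)) : G ⧸ (L.map H.subtype)) = push H M (g.ap ((a : ↥H) : ↥H ⧸ L))
    rw [Fix.ap_mk, Fix.ap_mk, hw, ← push_smul]

/-- The functor `Or_{F_H}(H) ⥤ Or_F(G)` sending `H/K` to `G/K`. -/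
def toG (F : Set (Subgroup G)) : Obj ↥H (fam H F) ⥤ Obj G F where
  obj K := ⟨K.grp.map H.subtype, K.mem⟩
  map {K L} f := ⟨push H L.grp f.1, by
    rintro g hg
    obtain ⟨k, hk, rfl⟩ := hg
    show ((k : ↥H) : G) • push H L.grp f.1 = push H L.grp f.1
    rw [← push_smul, f.2 k hk]⟩
  map_id K := Subtype.ext (by
    show push H K.grp (((1 : ↥H)) : ↥H ⧸ K.grp) = (((1 : G)) : G ⧸ _)
    rw [push_mk, OneMemClass.coe_one])
  map_comp {K L M} f g := Subtype.ext ((ap_push H g _ rfl f.1).symm)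

/-- The restriction functor `res^G_H` from `RΓ_G`-modules to `RΓ_H`-modules,
given by precomposition with `toG`. -/
def resF (R : Type) [CommRing R] (F : Set (Subgroup G)) (H : Subgroup G) :
    OMod G R F ⥤ OMod ↥H R (fam H F) :=
  (Functor.whiskeringLeft _ _ (ModuleCat.{0} R)).obj (toG H F).op

instance (R : Type) [CommRing R] (F : Set (Subgroup G)) (H : Subgroup G) :
    (resF R F H).Additive where
  map_add {X Y f g} := by
    exact Functor.map_add (F := (Functor.whiskeringLeft _ _ (ModuleCat.{0} R)).obj (toG H F).op)

end Restriction

section Conjugation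

lemma mem_normalizer_of_mem_centralizer {Q : Subgroup G} {c : G}
    (hc : c ∈ Subgroup.centralizer (Q : Set G)) : c ∈ Subgroup.normalizer (Q : Set G) := by
  rw [Subgroup.mem_normalizer_iff]
  intro h
  constructor
  · intro hh
    have hcomm : h * c = c * h := Subgroup.mem_centralizer_iff.mp hc h hh
    have : c * h * c⁻¹ = h := by rw [← hcomm]; group
    rwa [this]
  · intro hh
    have hch : c * h * c⁻¹ ∈ Q := hh
    have hcomm : (c * h * c⁻¹) * c = c * (c * h * c⁻¹) :=
      Subgroup.mem_centralizer_iff.mp hc _ hch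
    have h1 : c * h = (c * h * c⁻¹) * c := by group
    have h4 : c * h = c * (c * h * c⁻¹) := h1.trans hcomm
    have h5 : h = c * h * c⁻¹ := mul_left_cancel h4
    rw [h5]
    exact hch
    
/-- The endomorphism of `G/Q` in the orbit category determined by an element
`n` of the normalizer of `Q`; it sends `gQ` to `g n⁻¹ Q`. -/
def conjMor {F : Set (Subgroup G)} (Q : Obj G F) (n : G) (hn : n ∈ Subgroup.normalizer (Q.grp : Set G)) :
    Q ⟶ Q :=
  ⟨((n⁻¹ : G) : G ⧸ Q.grp), fun q hq => by
    show q • (((n⁻¹ : G)) : G ⧸ Q.grp) = _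
    rw [MulAction.Quotient.smul_mk, smul_eq_mul]
    refine (QuotientGroup.eq).2 ?_
    have : (q * n⁻¹)⁻¹ * n⁻¹ = n * q⁻¹ * n⁻¹ := by group
    rw [this]
    exact (Subgroup.mem_normalizer_iff.mp hn q⁻¹).mp (inv_mem hq)⟩

/-- An `RΓ_G`-module `M` is conjugation invariant if, for every `Q ∈ F`,
the centralizer `C_G(Q)` acts trivially on `M(Q)`. -/
def ConjInv {R : Type} [CommRing R] {F : Set (Subgroup G)} (M : OMod G R F) : Prop :=
  ∀ (Q : Obj G F) (c : G) (hc : c ∈ Subgroup.centralizer (Q.grp : Set G)),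
    M.map (conjMor Q c (mem_normalizer_of_mem_centralizer hc)).op = 𝟙 (M.obj (Opposite.op Q))

/-- A subgroup `H` controls `p`-fusion in `G`. -/
def ControlsPFusion (p : ℕ) (H : Subgroup G) : Prop :=
  ¬ (p ∣ H.index) ∧
    ∀ (Q : Subgroup G) (g : G), Q ≤ H → IsPGroup p ↥Q → conjSub g⁻¹ Q ≤ H →
      ∃ c ∈ Subgroup.centralizer (Q : Set G), ∃ h ∈ H, g = c * h

end Conjugation

section Chains

variable {F : Set (Subgroup G)}

/-- `(A) ≤ (B)` : some conjugate of `A` is contained in `B`. -/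
def classLE (A B : Obj G F) : Prop := ∃ g : G, conjSub g A.grp ≤ B.grp

/-- `(A) < (B)` in the partial order of conjugacy classes of subgroups in `F`. -/
def classLT (A B : Obj G F) : Prop := classLE A B ∧ ¬ classLE B A

/-- A strict chain `(K_0) < (K_1) < ⋯ < (K_l)` of conjugacy classes in `F`. -/
def IsStrictChain {l : ℕ} (c : Fin (l + 1) → Obj G F) : Prop :=
  ∀ i : Fin l, classLT (c i.castSucc) (c i.succ)

end Chains


section Local

lemma spanPrime (p : ℕ) (hp : p.Prime) : (Ideal.span {(p : ℤ)}).IsPrime := by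
  rw [Ideal.span_singleton_prime (by exact_mod_cast hp.ne_zero)]
  exact Nat.prime_iff_prime_int.mp hp

/-- The ring `ℤ_(p)` of `p`-local integers. -/
abbrev zloc (p : ℕ) (hp : p.Prime) : Type :=
  Localization (@Ideal.primeCompl ℤ _ (Ideal.span {(p : ℤ)}) (spanPrime p hp))

instance {R S : Type} [CommRing R] [CommRing S] (f : R →+* S) :
    (ModuleCat.extendScalars.{0,0,0} f).Additive := by
  letI : PreservesColimits (ModuleCat.extendScalars.{0,0,0} f) :=
    (ModuleCat.extendRestrictScalarsAdj f).leftAdjoint_preservesColimits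
  letI := preservesBinaryBiproducts_of_preservesBinaryCoproducts
    (ModuleCat.extendScalars.{0,0,0} f)
  exact Functor.additive_of_preservesBinaryBiproducts _

/-- The `p`-localization functor on `ℤΓ_G`-modules, applying `ℤ_(p) ⊗_ℤ -` objectwise. -/
noncomputable def locF (F : Set (Subgroup G)) (p : ℕ) (hp : p.Prime) :
    OMod G ℤ F ⥤ OMod G (zloc p hp) F :=
  (Functor.whiskeringRight _ _ _).obj (ModuleCat.extendScalars (algebraMap ℤ (zloc p hp)))

instance (F : Set (Subgroup G)) (p : ℕ) (hp : p.Prime) : (locF F p hp).Additive where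
  map_add {X Y f g} := by
    exact Functor.map_add (F := (Functor.whiskeringRight _ _ _).obj
      (ModuleCat.extendScalars (algebraMap ℤ (zloc p hp))))

end Local


instance hasExtOMod (R : Type) [CommRing R] (F : Set (Subgroup G)) :
    HasExt.{1} (OMod G R F) := by
  letI : HasDerivedCategory.{1} (OMod G R F) := HasDerivedCategory.standard _
  exact hasExt_of_hasDerivedCategory.{1} _

end OrbitPaper

namespace OrbitPaper

variable {G : Type} [Group G]

lemma mem_conjSub {g x : G} {K : Subgroup G} : x ∈ conjSub g K ↔ g⁻¹ * x * g ∈ K := by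
  rw [conjSub, Subgroup.mem_map_equiv]
  simp

lemma conjSub_inv_le_iff {g : G} {K B : Subgroup G} :
    conjSub g⁻¹ K ≤ B ↔ ∀ k ∈ K, g⁻¹ * k * g ∈ B := by
  refine ⟨fun h k hk => h (mem_conjSub.2 (by simpa [mul_assoc] using hk)), fun h x hx => ?_⟩
  simpa [mul_assoc] using h _ (mem_conjSub.1 hx)

lemma smul_mk_eq_mk_iff {B : Subgroup G} {k a : G} :
    k • (a : G ⧸ B) = a ↔ a⁻¹ * k * a ∈ B := by
  rw [MulAction.Quotient.smul_mk, smul_eq_mul, QuotientGroup.eq, ← inv_mem_iff]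
  group

lemma conjSub_inv_le_iff_fixes {K B : Subgroup G} {a : G} :
    conjSub a⁻¹ K ≤ B ↔ ∀ k ∈ K, k • (a : G ⧸ B) = a := by
  simp only [conjSub_inv_le_iff, smul_mk_eq_mk_iff]

lemma conjSub_inv_le_of_mk_eq {K H : Subgroup G} {g g' : G} (hg : (g : G ⧸ H) = g')
    (h : conjSub g⁻¹ K ≤ H) : conjSub g'⁻¹ K ≤ H := by
  obtain ⟨x, hx, rfl⟩ : ∃ x ∈ H, g * x = g' := ⟨g⁻¹ * g', QuotientGroup.eq.1 hg, by group⟩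
  rw [conjSub_inv_le_iff] at h ⊢
  intro k hk
  have hconj := mul_mem (mul_mem (inv_mem hx) (h k hk)) hx
  rwa [show x⁻¹ * (g⁻¹ * k * g) * x = (g * x)⁻¹ * k * (g * x) by group] at hconj

lemma quotientMapOfLE_smul {B H : Subgroup G} (hB : B ≤ H) (g : G) (y : G ⧸ B) :
    Subgroup.quotientMapOfLE hB (g • y) = g • Subgroup.quotientMapOfLE hB y := by
  induction y using QuotientGroup.induction_on with
  | H a => rfl

namespace Fix

variable {B C : Subgroup G}

lemma quotientMapOfLE_ap {H : Subgroup G} (hB : B ≤ H) (hC : C ≤ H) (x : Fix B C)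
    (hx : Subgroup.quotientMapOfLE hC x.1 = ((1 : G) : G ⧸ H)) (y : G ⧸ B) :
    Subgroup.quotientMapOfLE hC (x.ap y) = Subgroup.quotientMapOfLE hB y := by
  induction y using QuotientGroup.induction_on with
  | H a =>
    rw [ap_mk, quotientMapOfLE_smul, hx, Subgroup.quotientMapOfLE_apply_mk,
      MulAction.Quotient.smul_mk, smul_eq_mul, mul_one]

end Fix

section Push

variable {H : Subgroup G}

lemma push_injective (L : Subgroup H) : Function.Injective (push H L) := by
  intro x y hxy
  induction x using QuotientGroup.induction_on with | H a =>
  induction y using QuotientGroup.induction_on with | H b =>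
  refine QuotientGroup.eq.2 ?_
  obtain ⟨l, hl, hlab⟩ := QuotientGroup.eq.1 hxy
  rwa [show l = a⁻¹ * b from Subtype.ext hlab] at hl

lemma quotientMapOfLE_push (L : Subgroup H) (y : H ⧸ L) :
    Subgroup.quotientMapOfLE (Subgroup.map_subtype_le L) (push H L y) = ((1 : G) : G ⧸ H) := by
  induction y using QuotientGroup.induction_on with
  | H a => exact QuotientGroup.eq.2 (by simp)

lemma Fix.exists_push_eq {A B : Subgroup H} (x : Fix (A.map H.subtype) (B.map H.subtype))
    (hx : Subgroup.quotientMapOfLE (Subgroup.map_subtype_le B) x.1 = ((1 : G) : G ⧸ H)) :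
    ∃ y : Fix A B, push H B y.1 = x.1 := by
  obtain ⟨a, ha⟩ := QuotientGroup.mk_surjective x.1
  have haH : a ∈ H := by
    simpa using QuotientGroup.eq.1 ((Subgroup.quotientMapOfLE_apply_mk _ a).symm.trans
      ((congrArg _ ha).trans hx))
  refine ⟨⟨((⟨a, haH⟩ : H) : H ⧸ B), fun k hk => push_injective B ?_⟩, ha⟩
  rw [push_smul, push_mk]
  exact ha ▸ x.2 k ⟨k, hk, rfl⟩

end Push

section CommaCategory

variable {F : Set (Subgroup G)} {H : Subgroup G} {K : Obj G F}

/-- The `K`-fixed point `gL` of `G/L` that the structure map `G/K ⟶ G/L` of `j` assigns to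
the coset `K`. -/
def basePoint (j : CostructuredArrow (toG H F).op (Opposite.op K)) :
    G ⧸ j.left.unop.grp.map H.subtype :=
  (j.hom.unop : Fix K.grp _).1

lemma smul_basePoint (j : CostructuredArrow (toG H F).op (Opposite.op K)) {k : G} (hk : k ∈ K.grp) :
    k • basePoint j = basePoint j :=
  (j.hom.unop : Fix K.grp _).2 k hk

lemma basePoint_eq_ap_of_hom {j j' : CostructuredArrow (toG H F).op (Opposite.op K)} (f : j ⟶ j') :
    basePoint j = ((toG H F).map f.left.unop).ap (basePoint j') :=
  congrArg (fun x => (x.unop : Fix K.grp _).1) (CostructuredArrow.w f).symm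

def cosetOf (j : CostructuredArrow (toG H F).op (Opposite.op K)) : G ⧸ H :=
  Subgroup.quotientMapOfLE (Subgroup.map_subtype_le _) (basePoint j)

lemma cosetOf_eq_of_hom {j j' : CostructuredArrow (toG H F).op (Opposite.op K)} (f : j ⟶ j') :
    cosetOf j = cosetOf j' := by
  rw [cosetOf, basePoint_eq_ap_of_hom f]
  exact Fix.quotientMapOfLE_ap _ _ _ (quotientMapOfLE_push _ _) _

lemma exists_mk_eq_cosetOf (j : CostructuredArrow (toG H F).op (Opposite.op K)) :
    ∃ a : G, (a : G ⧸ H) = cosetOf j ∧ conjSub a⁻¹ K.grp ≤ H := by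
  obtain ⟨a, ha⟩ := QuotientGroup.mk_surjective (basePoint j)
  refine ⟨a, by rw [cosetOf, ← ha]; rfl, ?_⟩
  exact (conjSub_inv_le_iff_fixes.2 fun k hk => ha ▸ smul_basePoint j hk).trans
    (Subgroup.map_subtype_le _)

variable (hF : IsFamily F) {c : G} (hc : conjSub c⁻¹ K.grp ≤ H)

def conjObj : Obj H (fam H F) :=
  ⟨(conjSub c⁻¹ K.grp).subgroupOf H, by
    show ((conjSub c⁻¹ K.grp).subgroupOf H).map H.subtype ∈ F
    rw [Subgroup.subgroupOf_map_subtype, inf_of_le_left hc]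
    exact hF.1 K.grp K.mem c⁻¹⟩

lemma map_subtype_conjObj : (conjObj hF hc).grp.map H.subtype = conjSub c⁻¹ K.grp := by
  show ((conjSub c⁻¹ K.grp).subgroupOf H).map H.subtype = _
  rw [Subgroup.subgroupOf_map_subtype, inf_of_le_left hc]

def conjArrow : CostructuredArrow (toG H F).op (Opposite.op K) :=
  CostructuredArrow.mk (Y := Opposite.op (conjObj hF hc))
    (Quiver.Hom.op (X := K) (Y := (toG H F).obj (conjObj hF hc))
      ⟨(c : G ⧸ _), conjSub_inv_le_iff_fixes.1 (map_subtype_conjObj hF hc).ge⟩)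

lemma cosetOf_conjArrow : cosetOf (conjArrow hF hc) = c := rfl

variable {hF hc} in
lemma smul_push_hom_conjArrow {j : CostructuredArrow (toG H F).op (Opposite.op K)}
    (f : j ⟶ conjArrow hF hc) : c • push H j.left.unop.grp f.left.unop.1 = basePoint j :=
  (basePoint_eq_ap_of_hom f).symm

instance (j : CostructuredArrow (toG H F).op (Opposite.op K)) :
    Subsingleton (j ⟶ conjArrow hF hc) :=
  ⟨fun f f' => CostructuredArrow.hom_ext f f' (Quiver.Hom.unop_inj (Subtype.ext
    (push_injective _ (smul_left_cancel c
      ((smul_push_hom_conjArrow f).trans (smul_push_hom_conjArrow f').symm)))))⟩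

lemma nonempty_hom_conjArrow {j : CostructuredArrow (toG H F).op (Opposite.op K)}
    (h : cosetOf j = c) : Nonempty (j ⟶ conjArrow hF hc) := by
  -- the morphism is the `H`-map whose induced `G`-map sends `c⁻¹Kc` to `c⁻¹ • basePoint j`
  have hfix : ∀ y ∈ (conjObj hF hc).grp.map H.subtype,
      y • (c⁻¹ • basePoint j) = c⁻¹ • basePoint j := by
    intro y hy
    rw [map_subtype_conjObj, mem_conjSub, inv_inv] at hy
    rw [smul_smul, show y * c⁻¹ = c⁻¹ * (c * y * c⁻¹) by group, mul_smul, smul_basePoint j hy]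
  have hbase : Subgroup.quotientMapOfLE (Subgroup.map_subtype_le _) (c⁻¹ • basePoint j) =
      ((1 : G) : G ⧸ H) := by
    rw [quotientMapOfLE_smul, ← cosetOf, h, MulAction.Quotient.smul_mk, smul_eq_mul, inv_mul_cancel]
  obtain ⟨ψ, hψ⟩ := Fix.exists_push_eq ⟨_, hfix⟩ hbase
  refine ⟨CostructuredArrow.homMk (Quiver.Hom.op (X := conjObj hF hc) (Y := j.left.unop) ψ)
    (Quiver.Hom.unop_inj (Subtype.ext ?_))⟩
  show c • push H _ ψ.1 = _
  rw [hψ, smul_inv_smul]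
  rfl

end CommaCategory

lemma exists_fin_transversal {H : Subgroup G} [Finite (G ⧸ H)] (P : G → Prop)
    (hP : ∀ g g' : G, (g : G ⧸ H) = g' → P g → P g') :
    ∃ (n : ℕ) (c : Fin n → G), (∀ i, P (c i)) ∧ ∀ g, P g → ∃! i, (g : G ⧸ H) = c i := by
  let e := (Finite.equivFin {x : G ⧸ H // P x.out}).symm
  refine ⟨_, fun i => (e i).1.out, fun i => (e i).2, fun g hg => ?_⟩
  have hout : P (g : G ⧸ H).out := hP g _ (QuotientGroup.out_eq' _).symm hg
  refine ⟨e.symm ⟨g, hout⟩, by simp, fun i hi => e.eq_symm_apply.2 (Subtype.ext ?_)⟩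
  simpa using hi.symm

section Transversal

variable {F : Set (Subgroup G)} {H : Subgroup G} {K : Obj G F} (hF : IsFamily F)
  {ι : Type} {c : ι → G} (hc : ∀ i, conjSub (c i)⁻¹ K.grp ≤ H)

def conjArrowFunctor : Discrete ι ⥤ CostructuredArrow (toG H F).op (Opposite.op K) :=
  Discrete.functor fun i => conjArrow hF (hc i)

lemma final_conjArrowFunctor (hcov : ∀ g : G, conjSub g⁻¹ K.grp ≤ H → ∃! i, (g : G ⧸ H) = c i) :
    (conjArrowFunctor hF hc).Final := by
  refine ⟨fun j => ?_⟩
  obtain ⟨a, ha, haK⟩ := exists_mk_eq_cosetOf j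
  obtain ⟨i₀, hi₀, huniq⟩ := hcov a haK
  have hidx (X : StructuredArrow j (conjArrowFunctor hF hc)) : X.right.as = i₀ := by
    have hX : j ⟶ conjArrow hF (hc X.right.as) := X.hom
    exact huniq _ (ha.trans ((cosetOf_eq_of_hom hX).trans (cosetOf_conjArrow _ _)))
  let f₀ : j ⟶ (conjArrowFunctor hF hc).obj (Discrete.mk i₀) :=
    (nonempty_hom_conjArrow hF (hc i₀) (ha.symm.trans hi₀)).some
  refine isConnected_of_isTerminal _ (IsTerminal.ofUniqueHom (Y := StructuredArrow.mk f₀)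
    (fun X => StructuredArrow.homMk (Discrete.eqToHom (hidx X)) ?_)
    (fun _ _ => StructuredArrow.hom_ext _ _ (Subsingleton.elim _ _)))
  exact Subsingleton.elim (α := j ⟶ conjArrow hF (hc i₀)) _ _

noncomputable def indObjLinearEquivDirectSum
    (hcov : ∀ g : G, conjSub g⁻¹ K.grp ≤ H → ∃! i, (g : G ⧸ H) = c i) {R : Type} [CommRing R]
    {ind : OMod H R (fam H F) ⥤ OMod G R F} (adj : ind ⊣ resF R F H) (N : OMod H R (fam H F)) :
    (ind.obj N).obj (Opposite.op K) ≃ₗ[R]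
      DirectSum ι fun i => N.obj (Opposite.op (conjObj hF (hc i))) := by
  classical
  have := final_conjArrowFunctor hF hc hcov
  let Φ := (toG H F).op
  exact (((adj.leftAdjointUniq (Φ.lanAdjunction (ModuleCat.{0} R))).app N).app (Opposite.op K) ≪≫
    Φ.leftKanExtensionObjIsoColimit N (Opposite.op K) ≪≫
    (Functor.Final.colimitIso (conjArrowFunctor hF hc) _).symm ≪≫
    HasColimit.isoOfNatIso (Discrete.compNatIsoDiscrete _ _) ≪≫
    ModuleCat.coprodIsoDirectSum _).toLinearEquiv

end Transversal

end OrbitPaper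

open OrbitPaper CategoryTheory CategoryTheory.Limits

/-- For the induction functor `ind^G_H` (the left adjoint of the
restriction functor `res^G_H`), an `RΓ_H`-module `N` and `K ∈ F`, there is an isomorphism
of `R`-modules `(ind^G_H N)(G/K) ≅ ⊕ N(g⁻¹Kg)`, the sum running over the cosets
`gH ∈ G/H` with `g⁻¹Kg ≤ H`. -/
theorem statement5 (G : Type) [Group G] [Fintype G] (R : Type) [CommRing R]
    (F : Set (Subgroup G)) (hF : IsFamily F) (H : Subgroup G)
    (ind : OMod ↥H R (fam H F) ⥤ OMod G R F) (adj : ind ⊣ resF R F H)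
    (N : OMod ↥H R (fam H F)) (K : Obj G F) :
    ∃ (n : ℕ) (c : Fin n → G) (hc : ∀ i, conjSub (c i)⁻¹ K.grp ≤ H),
      (∀ g : G, conjSub g⁻¹ K.grp ≤ H →
        ∃! i : Fin n, ((g : G) : G ⧸ H) = ((c i : G) : G ⧸ H)) ∧
      Nonempty ((ind.obj N).obj (Opposite.op K) ≃ₗ[R]
        DirectSum (Fin n) (fun i => N.obj (Opposite.op
          (⟨(conjSub (c i)⁻¹ K.grp).subgroupOf H, by
              show ((conjSub (c i)⁻¹ K.grp).subgroupOf H).map H.subtype ∈ F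
              rw [Subgroup.subgroupOf_map_subtype, inf_of_le_left (hc i)]
              exact hF.1 K.grp K.mem (c i)⁻¹⟩ : Obj ↥H (fam H F))))) := by
  obtain ⟨n, c, hc, hcov⟩ := exists_fin_transversal (H := H) (fun g => conjSub g⁻¹ K.grp ≤ H)
    fun _ _ => conjSub_inv_le_of_mk_eq
  exact ⟨n, c, hc, hcov, ⟨indObjLinearEquivDirectSum hF hc hcov adj N⟩⟩
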